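/- Let n, m, k be positive integers with k < m < n. Let A be an n×n real symmetric positive semidefinite matrix with rank(A) = n − k, let B be an m×n real matrix with rank m, and let W_k be an m×m real symmetric positive semidefinite matrix of rank k such that A_k = A + BᵀW_kB is symmetric positive definite. Let Z be an n×(n−m) real matrix whose columns form a basis of the kernel of B, suppose ZᵀAZ is invertible, and set V = Z(ZᵀAZ)⁻¹Zᵀ. Then A_k⁻¹·A is idempotent, and the matrices V·A and A_k⁻¹·A commute: (A_k⁻¹·A)·(V·A) = (V·A)·(A_k⁻¹·A), with common value V·A. -/

import Mathlib

/-!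
Put `N = BᵀW_kB`. Since `A + N` is invertible, the column spaces of `A` and `N` span `ℝⁿ`, and
`rank A + rank N ≤ n` makes them independent. The columns of `A (A + N)⁻¹ N = N - N (A + N)⁻¹ N`
lie in both, so this product vanishes, i.e. `A (A + N)⁻¹ A = A`: this is the idempotency of
`A_k⁻¹ A`, and it also gives `V A · A_k⁻¹ A = V A`. Finally `B Z = 0` gives `N V = 0`, so
`A (V A) = (A + N) (V A)` and `A_k⁻¹ A · V A = V A`.
-/

open Matrix

theorem Submodule.disjoint_of_sup_eq_top_of_finrank_add_le {K V : Type*} [Field K]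
    [AddCommGroup V] [Module K V] [FiniteDimensional K V] {s t : Submodule K V}
    (hst : s ⊔ t = ⊤) (hrank : Module.finrank K s + Module.finrank K t ≤ Module.finrank K V) :
    Disjoint s t := by
  rw [disjoint_iff, ← Submodule.finrank_eq_zero]
  have := Submodule.finrank_sup_add_finrank_inf_eq s t
  rw [hst, finrank_top] at this
  omega

namespace Matrix

theorem range_mulVecLin_mul_le {R l m n : Type*} [CommSemiring R] [Fintype m] [Fintype n]
    (M : Matrix l m R) (X : Matrix m n R) :
    LinearMap.range (M * X).mulVecLin ≤ LinearMap.range M.mulVecLin := by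
  rw [mulVecLin_mul]
  exact LinearMap.range_comp_le_range _ _

variable {K n : Type*} [Field K] [Fintype n] [DecidableEq n]

theorem range_mulVecLin_sup_eq_top_of_isUnit_det_add {M N : Matrix n n K}
    (h : IsUnit (M + N).det) :
    LinearMap.range M.mulVecLin ⊔ LinearMap.range N.mulVecLin = ⊤ := by
  refine eq_top_iff.mpr fun x _ => ?_
  have hx : x = M *ᵥ ((M + N)⁻¹ *ᵥ x) + N *ᵥ ((M + N)⁻¹ *ᵥ x) := by
    rw [← add_mulVec, mulVec_mulVec, mul_nonsing_inv _ h, one_mulVec]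
  rw [hx]
  exact Submodule.add_mem_sup ⟨_, rfl⟩ ⟨_, rfl⟩

theorem mul_nonsing_inv_add_mul_eq_zero {M N : Matrix n n K} (h : IsUnit (M + N).det)
    (hrank : M.rank + N.rank ≤ Fintype.card n) : M * (M + N)⁻¹ * N = 0 := by
  have hdisj : Disjoint (LinearMap.range M.mulVecLin) (LinearMap.range N.mulVecLin) :=
    Submodule.disjoint_of_sup_eq_top_of_finrank_add_le
      (range_mulVecLin_sup_eq_top_of_isUnit_det_add h) (by simpa [rank] using hrank)
  have hN : M * (M + N)⁻¹ * N = N * (1 - (M + N)⁻¹ * N) := by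
    calc M * (M + N)⁻¹ * N = (M + N - N) * (M + N)⁻¹ * N := by rw [add_sub_cancel_right]
      _ = N * (1 - (M + N)⁻¹ * N) := by
        rw [sub_mul, mul_nonsing_inv _ h, sub_mul, one_mul, mul_sub, mul_one, mul_assoc]
  have hrange : LinearMap.range (M * (M + N)⁻¹ * N).mulVecLin = ⊥ := by
    refine le_bot_iff.mp (hdisj ?_ ?_)
    · rw [mul_assoc]; exact range_mulVecLin_mul_le _ _
    · rw [hN]; exact range_mulVecLin_mul_le _ _
  rw [LinearMap.range_eq_bot, ← toLin'_apply'] at hrange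
  exact toLin'.map_eq_zero_iff.mp hrange

theorem mul_nonsing_inv_add_mul_self {M N : Matrix n n K} (h : IsUnit (M + N).det)
    (hrank : M.rank + N.rank ≤ Fintype.card n) : M * (M + N)⁻¹ * M = M := by
  calc M * (M + N)⁻¹ * M = M * (M + N)⁻¹ * (M + N) - M * (M + N)⁻¹ * N := by
        rw [mul_add, add_sub_cancel_right]
    _ = M := by
        rw [mul_nonsing_inv_add_mul_eq_zero h hrank, sub_zero, mul_assoc,
          nonsing_inv_mul _ h, mul_one]

theorem isIdempotentElem_nonsing_inv_add_mul {M N : Matrix n n K} (h : IsUnit (M + N).det)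
    (hrank : M.rank + N.rank ≤ Fintype.card n) : IsIdempotentElem ((M + N)⁻¹ * M) := by
  rw [IsIdempotentElem, mul_assoc, ← mul_assoc M, mul_nonsing_inv_add_mul_self h hrank]

theorem nonsing_inv_add_mul_mul_of_mul_eq_zero {M N X : Matrix n n K} (h : IsUnit (M + N).det)
    (hNX : N * X = 0) : (M + N)⁻¹ * M * X = X := by
  rw [mul_assoc, ← add_zero (M * X), ← hNX, ← add_mul, ← mul_assoc, nonsing_inv_mul _ h, one_mul]

end Matrix

theorem projectors_commute_general {n m k : ℕ}
    (A : Matrix (Fin n) (Fin n) ℝ) (B : Matrix (Fin m) (Fin n) ℝ)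
    (Wk : Matrix (Fin m) (Fin m) ℝ)
    (hrA : A.rank = n - k) (hrWk : Wk.rank = k)
    (hAk : (A + Bᵀ * Wk * B).PosDef)
    (Z : Matrix (Fin n) (Fin (n - m)) ℝ) (hBZ : B * Z = 0) :
    ((A + Bᵀ * Wk * B)⁻¹ * A) * ((A + Bᵀ * Wk * B)⁻¹ * A) = (A + Bᵀ * Wk * B)⁻¹ * A ∧
    ((A + Bᵀ * Wk * B)⁻¹ * A) * ((Z * (Zᵀ * A * Z)⁻¹ * Zᵀ) * A) =
        (Z * (Zᵀ * A * Z)⁻¹ * Zᵀ) * A ∧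
    ((Z * (Zᵀ * A * Z)⁻¹ * Zᵀ) * A) * ((A + Bᵀ * Wk * B)⁻¹ * A) =
        (Z * (Zᵀ * A * Z)⁻¹ * Zᵀ) * A := by
  set N := Bᵀ * Wk * B
  set V := Z * (Zᵀ * A * Z)⁻¹ * Zᵀ
  have hunit : IsUnit (A + N).det := (isUnit_iff_isUnit_det _).mp hAk.isUnit
  have hrank : A.rank + N.rank ≤ Fintype.card (Fin n) := by
    have hNk : N.rank ≤ k := (rank_mul_le_left _ _).trans ((rank_mul_le_right _ _).trans hrWk.le)
    have hNn : N.rank ≤ n := by simpa using N.rank_le_card_width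
    rw [Fintype.card_fin]
    omega
  have hNZ : N * Z = 0 := by rw [Matrix.mul_assoc, hBZ, Matrix.mul_zero]
  have hNVA : N * (V * A) = 0 := by simp only [V, ← Matrix.mul_assoc, hNZ, Matrix.zero_mul]
  refine ⟨(isIdempotentElem_nonsing_inv_add_mul hunit hrank).eq,
    nonsing_inv_add_mul_mul_of_mul_eq_zero hunit hNVA,
    by rw [mul_assoc, ← mul_assoc A, mul_nonsing_inv_add_mul_self hunit hrank]⟩

/-- with `rank A = n - k`, `A_k = A + BᵀW_kB` positive definite and
`V = Z (ZᵀAZ)⁻¹ Zᵀ`, the matrix `A_k⁻¹ A` is idempotent and the projectors `V A` and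
`A_k⁻¹ A` commute, with common product `V A`. -/
theorem projectors_commute {n m k : ℕ}
    (hk : 0 < k) (hkm : k < m) (hmn : m < n)
    (A : Matrix (Fin n) (Fin n) ℝ) (B : Matrix (Fin m) (Fin n) ℝ)
    (Wk : Matrix (Fin m) (Fin m) ℝ)
    (hA : A.PosSemidef) (hrA : A.rank = n - k) (hrB : B.rank = m)
    (hWk : Wk.PosSemidef) (hrWk : Wk.rank = k)
    (hAk : (A + Bᵀ * Wk * B).PosDef)
    (Z : Matrix (Fin n) (Fin (n - m)) ℝ) (hBZ : B * Z = 0) (hrZ : Z.rank = n - m)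
    (hZAZ : IsUnit (Zᵀ * A * Z)) :
    ((A + Bᵀ * Wk * B)⁻¹ * A) * ((A + Bᵀ * Wk * B)⁻¹ * A) = (A + Bᵀ * Wk * B)⁻¹ * A ∧
    ((A + Bᵀ * Wk * B)⁻¹ * A) * ((Z * (Zᵀ * A * Z)⁻¹ * Zᵀ) * A) =
        (Z * (Zᵀ * A * Z)⁻¹ * Zᵀ) * A ∧
    ((Z * (Zᵀ * A * Z)⁻¹ * Zᵀ) * A) * ((A + Bᵀ * Wk * B)⁻¹ * A) =
        (Z * (Zᵀ * A * Z)⁻¹ * Zᵀ) * A :=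
  projectors_commute_general A B Wk hrA hrWk hAk Z hBZ
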